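/- arXiv:1612.02361 — 2 statements merged into one kernel-verified Lean document; each statement's English description precedes it below -/
import Mathlib

section
/- For a finite simple graph G with n ≥ 2 vertices, m ≥ 1 edges and minimum degree δ ≥ 2, HM₁(G) ≤ (n+1)²/(8m(n−1)) · M₁(G)². -/
open Finset BigOperators
open scoped Classical

variable {V : Type*} [Fintype V] [DecidableEq V]

/-- Edge degree: `d(e) = d(u) + d(v)` for `e = uv`. -/
def edeg (G : SimpleGraph V) [DecidableRel G.Adj] (e : Sym2 V) : ℕ :=
  Sym2.lift ⟨fun u v => G.degree u + G.degree v, fun u v => by simp [Nat.add_comm]⟩ e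

/-- First hyper Zagreb index. -/
noncomputable def HM1 (G : SimpleGraph V) [DecidableRel G.Adj] : ℝ :=
  ∑ e ∈ G.edgeFinset, (edeg G e : ℝ) ^ 2

/-- First Zagreb index. -/
noncomputable def M1 (G : SimpleGraph V) [DecidableRel G.Adj] : ℝ :=
  ∑ v, (G.degree v : ℝ) ^ 2

/-- Second hyper Zagreb index: sum of `d(e)d(f)` over unordered pairs of adjacent edges. -/
noncomputable def HM2 (G : SimpleGraph V) [DecidableRel G.Adj] : ℝ :=
  (1 / 2) * ∑ e ∈ G.edgeFinset, ∑ f ∈ G.edgeFinset,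
    if e ≠ f ∧ ∃ v, v ∈ e ∧ v ∈ f then (edeg G e : ℝ) * edeg G f else 0

lemma edeg_mk (G : SimpleGraph V) [DecidableRel G.Adj] (u v : V) :
    edeg G s(u, v) = G.degree u + G.degree v := rfl

lemma sum_edeg_nat (G : SimpleGraph V) [DecidableRel G.Adj] :
    2 * ∑ e ∈ G.edgeFinset, edeg G e = 2 * ∑ v, G.degree v ^ 2 := by
  have hdart : ∑ d : G.Dart, edeg G d.edge = 2 * ∑ e ∈ G.edgeFinset, edeg G e := by
    rw [← Finset.sum_fiberwise_of_maps_to (g := SimpleGraph.Dart.edge)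
      (t := G.edgeFinset) (fun d _ => by simp [SimpleGraph.Dart.edge_mem]) (fun d => edeg G d.edge)]
    rw [Finset.mul_sum]
    refine Finset.sum_congr rfl fun e he => ?_
    have : ∀ d ∈ Finset.univ.filter (fun d : G.Dart => d.edge = e),
        edeg G d.edge = edeg G e := fun d hd => by
      rw [(Finset.mem_filter.mp hd).2]
    rw [Finset.sum_congr rfl this, Finset.sum_const,
      G.dart_edge_fiber_card e (SimpleGraph.mem_edgeFinset.mp he), smul_eq_mul]
  have hfst : ∑ d : G.Dart, G.degree d.fst = ∑ v, G.degree v ^ 2 := by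
    rw [← Finset.sum_fiberwise_of_maps_to (g := fun d : G.Dart => d.fst)
      (t := Finset.univ) (fun d _ => Finset.mem_univ _) (fun d => G.degree d.fst)]
    refine Finset.sum_congr rfl fun v _ => ?_
    have : ∀ d ∈ Finset.univ.filter (fun d : G.Dart => d.fst = v),
        G.degree d.fst = G.degree v := fun d hd => by
      rw [(Finset.mem_filter.mp hd).2]
    rw [Finset.sum_congr rfl this, Finset.sum_const,
      SimpleGraph.dart_fst_fiber_card_eq_degree, smul_eq_mul, sq]
  have hsnd : ∑ d : G.Dart, G.degree d.snd = ∑ d : G.Dart, G.degree d.fst := by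
    exact Fintype.sum_bijective _ (SimpleGraph.Dart.symm_involutive (G := G)).bijective _ _
      (fun d => rfl)
  have hsplit : ∑ d : G.Dart, edeg G d.edge
      = ∑ d : G.Dart, G.degree d.fst + ∑ d : G.Dart, G.degree d.snd := by
    rw [← Finset.sum_add_distrib]
    exact Finset.sum_congr rfl fun d _ => rfl
  rw [← hdart, hsplit, hsnd, hfst, two_mul]

lemma sum_edeg_real (G : SimpleGraph V) [DecidableRel G.Adj] :
    ∑ e ∈ G.edgeFinset, (edeg G e : ℝ) = M1 G := by
  have h := sum_edeg_nat G
  have h' : ∑ e ∈ G.edgeFinset, edeg G e = ∑ v, G.degree v ^ 2 :=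
    Nat.eq_of_mul_eq_mul_left (by norm_num) h
  unfold M1
  exact_mod_cast h'

theorem stmt7 (G : SimpleGraph V) [DecidableRel G.Adj]
    (n m : ℕ) (hn : n = Fintype.card V) (hm : m = G.edgeFinset.card)
    (hn2 : 2 ≤ n) (hm1 : 1 ≤ m) (hδ : 2 ≤ G.minDegree) :
    HM1 G ≤ ((n : ℝ) + 1) ^ 2 / (8 * (m : ℝ) * ((n : ℝ) - 1)) * M1 G ^ 2 := by
  set a : ℝ := 4 with ha
  set b : ℝ := 2 * ((n : ℝ) - 1) with hb
  set S : ℝ := M1 G with hS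
  have hnR : (2 : ℝ) ≤ (n : ℝ) := by exact_mod_cast hn2
  have hmR : (1 : ℝ) ≤ (m : ℝ) := by exact_mod_cast hm1
  have hbpos : 0 < b := by rw [hb]; linarith
  have hbounds : ∀ e ∈ G.edgeFinset, a ≤ (edeg G e : ℝ) ∧ (edeg G e : ℝ) ≤ b := by
    intro e he
    induction e using Sym2.ind with
    | _ u v =>
      have hadj : G.Adj u v := SimpleGraph.mem_edgeFinset.mp he
      have hdu : 2 ≤ G.degree u := le_trans hδ (G.minDegree_le_degree u)
      have hdv : 2 ≤ G.degree v := le_trans hδ (G.minDegree_le_degree v)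
      have hdu' : G.degree u ≤ n - 1 := by
        rw [hn]; exact Nat.le_sub_one_of_lt (G.degree_lt_card_verts u)
      have hdv' : G.degree v ≤ n - 1 := by
        rw [hn]; exact Nat.le_sub_one_of_lt (G.degree_lt_card_verts v)
      have hcast : ((n : ℝ) - 1) = ((n - 1 : ℕ) : ℝ) := by
        have : (1 : ℕ) ≤ n := by omega
        push_cast [this]; ring
      rw [edeg_mk]
      constructor
      · have h4 : (4 : ℕ) ≤ G.degree u + G.degree v := by omega
        rw [ha]; exact_mod_cast h4
      · rw [hb, hcast]
        have h5 : G.degree u + G.degree v ≤ 2 * (n - 1) := by omega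
        exact_mod_cast h5
  have hsum : ∑ e ∈ G.edgeFinset, (edeg G e : ℝ) = S := sum_edeg_real G
  -- Step A : HM1 ≤ (a+b) S - a b m
  have stepA : HM1 G ≤ (a + b) * S - a * b * m := by
    have : HM1 G ≤ ∑ e ∈ G.edgeFinset, ((a + b) * (edeg G e : ℝ) - a * b) := by
      unfold HM1
      refine Finset.sum_le_sum fun e he => ?_
      obtain ⟨h1, h2⟩ := hbounds e he
      nlinarith [mul_nonneg (sub_nonneg.mpr h1) (sub_nonneg.mpr h2)]
    calc HM1 G ≤ ∑ e ∈ G.edgeFinset, ((a + b) * (edeg G e : ℝ) - a * b) := this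
      _ = (a + b) * S - a * b * m := by
          rw [Finset.sum_sub_distrib, ← Finset.mul_sum, hsum, Finset.sum_const, hm,
            nsmul_eq_mul]; ring
  -- Step B
  have hmpos : (0 : ℝ) < m := by linarith
  have hkey : ((n : ℝ) + 1) ^ 2 / (8 * (m : ℝ) * ((n : ℝ) - 1)) = (a + b) ^ 2 / (4 * a * b * m) := by
    have h1 : ((n : ℝ) - 1) ≠ 0 := by linarith
    have h2 : (m : ℝ) ≠ 0 := by linarith
    rw [ha, hb]
    field_simp
    ring
  have stepB : (a + b) * S - a * b * m ≤ (a + b) ^ 2 / (4 * a * b * m) * S ^ 2 := by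
    rw [div_mul_eq_mul_div, le_div_iff₀ (by positivity)]
    nlinarith [sq_nonneg ((a + b) * S - 2 * (a * b * m))]
  rw [hkey]
  exact le_trans stepA stepB
end

section
/- For a connected finite simple graph G with m edges, M₁(G)² ≤ m·HM₁(G) ≤ (Δ/δ + δ/Δ + 2)/4 · M₁(G)², where Δ and δ are the maximum and minimum degree. -/
open Finset BigOperators
open scoped Classical

variable {V : Type*} [Fintype V] [DecidableEq V]

lemma edeg_dart (G : SimpleGraph V) [DecidableRel G.Adj] (d : G.Dart) :
    edeg G d.edge = G.degree d.fst + G.degree d.snd := by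
  rcases d with ⟨⟨u, v⟩, h⟩
  rfl

/-- Key identity: the sum of edge degrees equals the first Zagreb index. -/
lemma sum_edeg (G : SimpleGraph V) [DecidableRel G.Adj] :
    2 * ∑ e ∈ G.edgeFinset, edeg G e = 2 * ∑ v, G.degree v * G.degree v := by
  have h1 : ∑ d : G.Dart, edeg G d.edge = 2 * ∑ e ∈ G.edgeFinset, edeg G e := by
    rw [← Finset.sum_fiberwise_of_maps_to (s := Finset.univ) (t := G.edgeFinset)
        (g := SimpleGraph.Dart.edge)
        (fun d _ => by rw [SimpleGraph.mem_edgeFinset]; exact d.edge_mem)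
        (fun d => edeg G d.edge)]
    rw [Finset.mul_sum]
    refine Finset.sum_congr rfl fun e he => ?_
    have hcard : #{d : G.Dart | d.edge = e} = 2 :=
      G.dart_edge_fiber_card e (SimpleGraph.mem_edgeFinset.mp he)
    calc ∑ d ∈ {d : G.Dart | d.edge = e}, edeg G d.edge
        = ∑ _d ∈ {d : G.Dart | d.edge = e}, edeg G e := by
          refine Finset.sum_congr rfl fun d hd => ?_
          rw [Finset.mem_filter] at hd
          rw [hd.2]
      _ = 2 * edeg G e := by rw [Finset.sum_const, hcard]; ring
  have hfst : ∑ d : G.Dart, G.degree d.fst = ∑ v, G.degree v * G.degree v := by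
    rw [← Finset.sum_fiberwise_of_maps_to (g := fun d : G.Dart => d.fst)
        (fun d _ => Finset.mem_univ _) (fun d => G.degree d.fst)]
    refine Finset.sum_congr rfl fun v _ => ?_
    calc ∑ d ∈ {d : G.Dart | d.fst = v}, G.degree d.fst
        = ∑ _d ∈ {d : G.Dart | d.fst = v}, G.degree v := by
          refine Finset.sum_congr rfl fun d hd => ?_
          rw [Finset.mem_filter] at hd
          rw [hd.2]
      _ = G.degree v * G.degree v := by
          rw [Finset.sum_const, G.dart_fst_fiber_card_eq_degree]; ring
  have hsnd : ∑ d : G.Dart, G.degree d.snd = ∑ d : G.Dart, G.degree d.fst :=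
    Fintype.sum_bijective SimpleGraph.Dart.symm
      (SimpleGraph.Dart.symm_involutive.bijective) _ _ (fun d => rfl)
  have h2 : ∑ d : G.Dart, edeg G d.edge = 2 * ∑ v, G.degree v * G.degree v := by
    calc ∑ d : G.Dart, edeg G d.edge
        = ∑ d : G.Dart, (G.degree d.fst + G.degree d.snd) :=
          Finset.sum_congr rfl fun d _ => edeg_dart G d
      _ = ∑ d : G.Dart, G.degree d.fst + ∑ d : G.Dart, G.degree d.snd :=
          Finset.sum_add_distrib
      _ = 2 * ∑ v, G.degree v * G.degree v := by rw [hsnd, hfst]; ring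
  rw [← h1, h2]

lemma M1_eq_sum_edeg (G : SimpleGraph V) [DecidableRel G.Adj] :
    M1 G = ∑ e ∈ G.edgeFinset, (edeg G e : ℝ) := by
  have h := sum_edeg G
  have h' : ∑ e ∈ G.edgeFinset, edeg G e = ∑ v, G.degree v * G.degree v :=
    Nat.eq_of_mul_eq_mul_left (by norm_num) h
  unfold M1
  have hc := congrArg (fun n : ℕ => (n : ℝ)) h'
  push_cast at hc
  rw [hc]
  exact Finset.sum_congr rfl fun v _ => sq ((G.degree v : ℝ))

theorem stmt19 (G : SimpleGraph V) [DecidableRel G.Adj]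
    (hconn : G.Connected) (m : ℕ) (hm : m = G.edgeFinset.card) :
    M1 G ^ 2 ≤ (m : ℝ) * HM1 G ∧
    (m : ℝ) * HM1 G ≤
      (((G.maxDegree : ℝ) / (G.minDegree : ℝ) +
        (G.minDegree : ℝ) / (G.maxDegree : ℝ) + 2) / 4) * M1 G ^ 2 := by
  by_cases hE : G.edgeFinset = ∅
  · have hdeg : ∀ v, G.degree v = 0 := by
      intro v
      by_contra h
      obtain ⟨w, hw⟩ := (G.degree_pos_iff_exists_adj v).mp (Nat.pos_of_ne_zero h)
      have : s(v, w) ∈ G.edgeFinset := by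
        rw [SimpleGraph.mem_edgeFinset]; exact hw
      rw [hE] at this
      exact absurd this (Finset.notMem_empty _)
    have hM1 : M1 G = 0 := by
      unfold M1
      refine Finset.sum_eq_zero fun v _ => by rw [hdeg v]; norm_num
    have hHM1 : HM1 G = 0 := by unfold HM1; rw [hE, Finset.sum_empty]
    rw [hM1, hHM1]
    norm_num
  · -- main case: there is an edge, so by connectivity every vertex has positive degree
    have hne : G.edgeFinset.Nonempty := Finset.nonempty_of_ne_empty hE
    obtain ⟨e₀, he₀⟩ := hne
    have hNontriv : Nontrivial V := by
      induction e₀ with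
      | h u v =>
        have : G.Adj u v := SimpleGraph.mem_edgeFinset.mp he₀
        exact ⟨u, v, this.ne⟩
    have hdegpos : ∀ v, 0 < G.degree v := by
      intro v
      rw [G.degree_pos_iff_exists_adj]
      obtain ⟨w, hw⟩ := exists_ne v
      obtain ⟨p⟩ := hconn.preconnected v w
      exact ⟨p.getVert 1, p.adj_snd (p.not_nil_of_ne (Ne.symm hw))⟩
    have hδpos : 0 < G.minDegree := by
      obtain ⟨v, hv⟩ := G.exists_minimal_degree_vertex
      rw [hv]; exact hdegpos v
    set δ : ℝ := (G.minDegree : ℝ) with hδdef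
    set Δ : ℝ := (G.maxDegree : ℝ) with hΔdef
    have hδ : (0 : ℝ) < δ := by rw [hδdef]; exact_mod_cast hδpos
    have hδΔ : G.minDegree ≤ G.maxDegree := by
      obtain ⟨v⟩ := (inferInstance : Nonempty V)
      exact le_trans (G.minDegree_le_degree v) (G.degree_le_maxDegree v)
    have hΔ : (0 : ℝ) < Δ := lt_of_lt_of_le hδ (by rw [hδdef, hΔdef]; exact_mod_cast hδΔ)
    set S : ℝ := M1 G with hSdef
    -- bounds on edge degrees
    have hbound : ∀ e ∈ G.edgeFinset, 2 * δ ≤ (edeg G e : ℝ) ∧ (edeg G e : ℝ) ≤ 2 * Δ := by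
      intro e he
      induction e with
      | h u v =>
        have hadj : G.Adj u v := SimpleGraph.mem_edgeFinset.mp he
        have h1 : edeg G s(u, v) = G.degree u + G.degree v := rfl
        have hu1 : G.minDegree ≤ G.degree u := G.minDegree_le_degree u
        have hv1 : G.minDegree ≤ G.degree v := G.minDegree_le_degree v
        have hu2 : G.degree u ≤ G.maxDegree := G.degree_le_maxDegree u
        have hv2 : G.degree v ≤ G.maxDegree := G.degree_le_maxDegree v
        constructor
        · rw [h1]; push_cast; rw [hδdef]; push_cast
          have : (G.minDegree : ℝ) ≤ G.degree u := by exact_mod_cast hu1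
          have : (G.minDegree : ℝ) ≤ G.degree v := by exact_mod_cast hv1
          push_cast at *; linarith
        · rw [h1]; push_cast; rw [hΔdef]; push_cast
          have : (G.degree u : ℝ) ≤ G.maxDegree := by exact_mod_cast hu2
          have : (G.degree v : ℝ) ≤ G.maxDegree := by exact_mod_cast hv2
          push_cast at *; linarith
    have hSsum : S = ∑ e ∈ G.edgeFinset, (edeg G e : ℝ) := M1_eq_sum_edeg G
    constructor
    · -- Cauchy–Schwarz
      have := sq_sum_le_card_mul_sum_sq (s := G.edgeFinset)
        (f := fun e => (edeg G e : ℝ))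
      rw [← hSsum] at this
      unfold S at this
      unfold HM1
      rw [hm]
      exact_mod_cast this
    · -- Pólya–Szegő
      have hpoint : ∀ e ∈ G.edgeFinset,
          (edeg G e : ℝ) ^ 2 + (2 * δ) * (2 * Δ) ≤ (2 * δ + 2 * Δ) * (edeg G e : ℝ) := by
        intro e he
        obtain ⟨h1, h2⟩ := hbound e he
        nlinarith [mul_nonneg (sub_nonneg.mpr h1) (sub_nonneg.mpr h2)]
      have hsum : HM1 G + (m : ℝ) * ((2 * δ) * (2 * Δ)) ≤ (2 * δ + 2 * Δ) * S := by
        have := Finset.sum_le_sum hpoint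
        rw [Finset.sum_add_distrib, Finset.sum_const, ← Finset.mul_sum] at this
        rw [hSsum]
        unfold HM1
        rw [hm]
        push_cast [nsmul_eq_mul] at this ⊢
        exact this
      have hm0 : (0 : ℝ) ≤ (m : ℝ) := Nat.cast_nonneg m
      have hHM1nonneg : 0 ≤ HM1 G := Finset.sum_nonneg fun e _ => sq_nonneg _
      have hS0 : 0 ≤ S := by
        rw [hSdef]; unfold M1; exact Finset.sum_nonneg fun v _ => sq_nonneg _
      have key : 4 * δ * Δ * ((m : ℝ) * HM1 G) ≤ (δ + Δ) ^ 2 * S ^ 2 := by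
        have h4 : (0 : ℝ) ≤ 4 * δ * Δ := by positivity
        have hstep := mul_le_mul_of_nonneg_left (mul_le_mul_of_nonneg_left hsum hm0) h4
        nlinarith [sq_nonneg ((δ + Δ) * S - 4 * (m : ℝ) * δ * Δ), hstep]
      have hcoef : ((Δ / δ + δ / Δ + 2) / 4) = (δ + Δ) ^ 2 / (4 * δ * Δ) := by
        field_simp
        ring
      rw [hcoef, div_mul_eq_mul_div, le_div_iff₀ (by positivity)]
      have hring : (m : ℝ) * HM1 G * (4 * δ * Δ) = 4 * δ * Δ * ((m : ℝ) * HM1 G) := by ring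
      rw [hring]
      exact key
end
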